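/- arXiv:2009.03653 — 5 statements merged into one kernel-verified Lean document; each statement's English description precedes it below -/
import Mathlib

section
/- Let D_{ij}:[0,1]→[0,1] be continuous, increasing functions with D_{ij}(0)=0 and D_{ij}(1)=1, and let α_i ≥ 0 for i=0,…,m satisfy ∑_i α_i = 1 and ∑_i α_i D_{ij}(v) = v for all v∈[0,1] and j=1,…,d. If C_0,…,C_m are d-dimensional copulas, then C(u_1,…,u_d) = ∑_{i=0}^m α_i C_i(D_{i1}(u_1),…,D_{id}(u_d)) is a d-dimensional copula. -/
open MeasureTheory Set

noncomputable def ginv (Df : ℝ → ℝ) (t : ℝ) : ℝ :=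
  sInf ({v ∈ Icc (0:ℝ) 1 | t ≤ Df v} ∪ {1})

lemma ginv_set_nonempty (Df : ℝ → ℝ) (t : ℝ) :
    ({v ∈ Icc (0:ℝ) 1 | t ≤ Df v} ∪ {1}).Nonempty := ⟨1, Or.inr rfl⟩

lemma ginv_set_bdd (Df : ℝ → ℝ) (t : ℝ) :
    BddBelow ({v ∈ Icc (0:ℝ) 1 | t ≤ Df v} ∪ {1}) := by
  refine ⟨0, fun v hv => ?_⟩
  rcases hv with ⟨⟨h, _⟩, _⟩ | h
  · exact h
  · simp_all

lemma ginv_nonneg (Df : ℝ → ℝ) (t : ℝ) : 0 ≤ ginv Df t := by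
  refine le_csInf (ginv_set_nonempty Df t) fun v hv => ?_
  rcases hv with ⟨⟨h, _⟩, _⟩ | h
  · exact h
  · simp_all

lemma ginv_le_one (Df : ℝ → ℝ) (t : ℝ) : ginv Df t ≤ 1 :=
  csInf_le (ginv_set_bdd Df t) (Or.inr rfl)

lemma ginv_mono (Df : ℝ → ℝ) : Monotone (ginv Df) := fun t t' h =>
  csInf_le_csInf (ginv_set_bdd Df t) (ginv_set_nonempty Df t')
    (union_subset_union_left _ (fun v hv => ⟨hv.1, h.trans hv.2⟩))

lemma ginv_mem (Df : ℝ → ℝ) (hc : ContinuousOn Df (Icc 0 1)) (t : ℝ) :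
    ginv Df t ∈ ({v ∈ Icc (0:ℝ) 1 | t ≤ Df v} ∪ {1}) := by
  refine IsClosed.csInf_mem ?_ (ginv_set_nonempty Df t) (ginv_set_bdd Df t)
  have h : {v ∈ Icc (0:ℝ) 1 | t ≤ Df v} = Icc (0:ℝ) 1 ∩ Df ⁻¹' Ici t := by
    ext w; simp [mem_preimage, mem_Ici]
  rw [h]
  exact ((hc.preimage_isClosed_of_isClosed isClosed_Icc isClosed_Ici)).union isClosed_singleton

lemma ginv_le_iff (Df : ℝ → ℝ) (hc : ContinuousOn Df (Icc 0 1))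
    (hm : MonotoneOn Df (Icc 0 1)) (h1 : Df 1 = 1) {s u : ℝ}
    (hs : s ≤ 1) (hu : u ∈ Icc (0:ℝ) 1) : ginv Df s ≤ u ↔ s ≤ Df u := by
  constructor
  · intro h
    have hmem := ginv_mem Df hc s
    rcases hmem with ⟨hg, hsD⟩ | hg
    · exact hsD.trans (hm hg hu h)
    · have hg1 : ginv Df s = 1 := hg
      have : u = 1 := le_antisymm hu.2 (hg1 ▸ h)
      rw [this, h1]; exact hs
  · intro h
    exact csInf_le (ginv_set_bdd Df s) (Or.inl ⟨hu, h⟩)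

/-- A `d`-dimensional copula: the restriction to `[0,1]^d` of the distribution function of
a random vector with uniform `[0,1]` marginals. -/
def IsCopula (d : ℕ) (C : (Fin d → ℝ) → ℝ) : Prop :=
  ∃ μ : Measure (Fin d → ℝ), IsProbabilityMeasure μ ∧
    (∀ k : Fin d, μ.map (fun x => x k) = volume.restrict (Icc (0:ℝ) 1)) ∧
    (∀ u : Fin d → ℝ, (∀ k, u k ∈ Icc (0:ℝ) 1) →
      C u = (μ {x | ∀ k, x k ≤ u k}).toReal)

/-- The distorted mix of copulas is again a copula. -/
theorem dm_copula_isCopula (d m : ℕ)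
    (D : Fin (m + 1) → Fin d → ℝ → ℝ)
    (hDcont : ∀ i j, ContinuousOn (D i j) (Icc 0 1))
    (hDmono : ∀ i j, MonotoneOn (D i j) (Icc 0 1))
    (hD0 : ∀ i j, D i j 0 = 0) (hD1 : ∀ i j, D i j 1 = 1)
    (α : Fin (m + 1) → ℝ) (hα : ∀ i, 0 ≤ α i) (hαsum : ∑ i, α i = 1)
    (hαD : ∀ (j : Fin d), ∀ v ∈ Icc (0:ℝ) 1, ∑ i, α i * D i j v = v)
    (C : Fin (m + 1) → (Fin d → ℝ) → ℝ) (hC : ∀ i, IsCopula d (C i)) :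
    IsCopula d (fun u => ∑ i, α i * C i (fun j => D i j (u j))) := by
  choose μ hprob hmarg hrepr using hC
  haveI : ∀ i, IsProbabilityMeasure (μ i) := hprob
  -- D maps [0,1] to [0,1]
  have hDmem : ∀ i j, ∀ v ∈ Icc (0:ℝ) 1, D i j v ∈ Icc (0:ℝ) 1 := by
    intro i j v hv
    constructor
    · rw [← hD0 i j]; exact hDmono i j (by simp) hv hv.1
    · rw [← hD1 i j]; exact hDmono i j hv (by simp) hv.2
  set T : Fin (m+1) → (Fin d → ℝ) → (Fin d → ℝ) :=
    fun i x j => ginv (D i j) (x j) with hTdef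
  have hTmeas : ∀ i, Measurable (T i) := fun i =>
    measurable_pi_lambda _ fun j => (ginv_mono (D i j)).measurable.comp (measurable_pi_apply j)
  set ν : Measure (Fin d → ℝ) := ∑ i, ENNReal.ofReal (α i) • ((μ i).map (T i)) with hνdef
  -- sum is 1 in ENNReal
  have hαsum' : ∑ i, ENNReal.ofReal (α i) = 1 := by
    rw [← ENNReal.ofReal_sum_of_nonneg (fun i _ => hα i), hαsum, ENNReal.ofReal_one]
  have hνP : IsProbabilityMeasure ν := by
    constructor
    rw [hνdef]
    rw [Measure.finset_sum_apply]
    have : ∀ i, (ENNReal.ofReal (α i) • ((μ i).map (T i))) univ = ENNReal.ofReal (α i) := by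
      intro i
      haveI : IsProbabilityMeasure ((μ i).map (T i)) :=
        Measure.isProbabilityMeasure_map (hTmeas i).aemeasurable
      rw [Measure.smul_apply, smul_eq_mul, measure_univ, mul_one]
    simp_rw [this]; exact hαsum'
  -- marginal null sets
  have hnull : ∀ i (k : Fin d), μ i {x | x k ∉ Icc (0:ℝ) 1} = 0 := by
    intro i k
    have h1 : μ i ((fun x : Fin d → ℝ => x k) ⁻¹' (Icc (0:ℝ) 1)ᶜ) =
        ((μ i).map (fun x => x k)) ((Icc (0:ℝ) 1)ᶜ) :=
      (Measure.map_apply (measurable_pi_apply k) measurableSet_Icc.compl).symm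
    rw [hmarg i k, Measure.restrict_apply measurableSet_Icc.compl, compl_inter_self] at h1
    have h2 : {x : Fin d → ℝ | x k ∉ Icc (0:ℝ) 1} =
        (fun x : Fin d → ℝ => x k) ⁻¹' (Icc (0:ℝ) 1)ᶜ := rfl
    rw [h2, h1]; simp
  have hboxc : ∀ i, μ i ({x : Fin d → ℝ | ∀ k, x k ∈ Icc (0:ℝ) 1}ᶜ) = 0 := by
    intro i
    refine measure_mono_null ?_ (measure_iUnion_null fun k => hnull i k)
    intro x hx
    simp only [mem_compl_iff, mem_setOf_eq, not_forall] at hx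
    obtain ⟨k, hk⟩ := hx
    exact mem_iUnion.2 ⟨k, hk⟩
  -- key measure identity
  have hkey : ∀ i (u : Fin d → ℝ), (∀ k, u k ∈ Icc (0:ℝ) 1) →
      μ i {x | ∀ k, ginv (D i k) (x k) ≤ u k} = μ i {x | ∀ k, x k ≤ D i k (u k)} := by
    intro i u hu
    have hB := hboxc i
    rw [← measure_inter_conull hB, ← measure_inter_conull (s := {x | ∀ k, x k ≤ D i k (u k)}) hB]
    congr 1
    ext x
    simp only [mem_inter_iff, mem_setOf_eq, and_congr_left_iff]
    intro hx
    exact forall_congr' fun k =>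
      ginv_le_iff (D i k) (hDcont i k) (hDmono i k) (hD1 i k) (hx k).2 (hu k)
  have hSmeas : ∀ c : Fin d → ℝ, MeasurableSet {x : Fin d → ℝ | ∀ k, x k ≤ c k} := by
    intro c
    have h : {x : Fin d → ℝ | ∀ k, x k ≤ c k} = ⋂ k, (fun x => x k) ⁻¹' Iic (c k) := by
      ext x; simp [mem_iInter]
    rw [h]
    exact MeasurableSet.iInter fun k => (measurable_pi_apply k) measurableSet_Iic
  refine ⟨ν, hνP, ?_, ?_⟩
  · -- marginals
    intro k
    haveI : IsProbabilityMeasure (ν.map (fun x => x k)) :=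
      Measure.isProbabilityMeasure_map (measurable_pi_apply k).aemeasurable
    refine Measure.ext_of_Iic _ _ (fun t => ?_)
    rw [Measure.map_apply (measurable_pi_apply k) measurableSet_Iic]
    have hpre : (fun x : Fin d → ℝ => x k) ⁻¹' Iic t = (fun x : Fin d → ℝ => x k) ⁻¹' Iic t := rfl
    rw [hνdef, Measure.finset_sum_apply]
    have hterm : ∀ i, (ENNReal.ofReal (α i) • ((μ i).map (T i)))
        ((fun x : Fin d → ℝ => x k) ⁻¹' Iic t) =
        ENNReal.ofReal (α i) * volume ({s : ℝ | ginv (D i k) s ≤ t} ∩ Icc 0 1) := by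
      intro i
      rw [Measure.smul_apply, smul_eq_mul,
        Measure.map_apply (hTmeas i) ((measurable_pi_apply k) measurableSet_Iic)]
      have hset : T i ⁻¹' ((fun x : Fin d → ℝ => x k) ⁻¹' Iic t) =
          (fun x : Fin d → ℝ => x k) ⁻¹' {s : ℝ | ginv (D i k) s ≤ t} := rfl
      have hm : MeasurableSet {s : ℝ | ginv (D i k) s ≤ t} :=
        (ginv_mono (D i k)).measurable measurableSet_Iic
      rw [hset, ← Measure.map_apply (measurable_pi_apply k) hm, hmarg i k,
        Measure.restrict_apply hm]
    simp_rw [hterm]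
    rw [Measure.restrict_apply measurableSet_Iic]
    rcases lt_or_ge t 0 with ht | ht0
    · -- t < 0
      have hempty : ∀ i : Fin (m+1), {s : ℝ | ginv (D i k) s ≤ t} ∩ Icc 0 1 = (∅ : Set ℝ) := by
        intro i
        apply eq_empty_iff_forall_notMem.2
        rintro s ⟨hg, h0, h1⟩
        exact absurd (le_trans (ginv_nonneg (D i k) s) hg) (not_le.2 ht)
      have h2 : Iic t ∩ Icc (0:ℝ) 1 = (∅ : Set ℝ) := by
        apply eq_empty_iff_forall_notMem.2
        rintro s ⟨hs, h0, h1⟩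
        rw [mem_Iic] at hs
        linarith
      simp [hempty, h2]
    · rcases le_or_gt t 1 with ht1 | ht1
      · -- 0 ≤ t ≤ 1
        have hset2 : ∀ i : Fin (m+1),
            {s : ℝ | ginv (D i k) s ≤ t} ∩ Icc 0 1 = Icc 0 (D i k t) := by
          intro i; ext s
          simp only [mem_inter_iff, mem_setOf_eq, mem_Icc]
          constructor
          · rintro ⟨hg, hs0, hs1⟩
            exact ⟨hs0, (ginv_le_iff (D i k) (hDcont i k) (hDmono i k) (hD1 i k) hs1
              ⟨ht0, ht1⟩).1 hg⟩
          · rintro ⟨hs0, hsD⟩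
            have hs1 : s ≤ 1 := hsD.trans (hDmem i k t ⟨ht0, ht1⟩).2
            exact ⟨(ginv_le_iff (D i k) (hDcont i k) (hDmono i k) (hD1 i k) hs1
              ⟨ht0, ht1⟩).2 hsD, hs0, hs1⟩
        have h2 : Iic t ∩ Icc (0:ℝ) 1 = Icc 0 t := by
          ext s
          simp only [mem_inter_iff, mem_Iic, mem_Icc]
          constructor
          · rintro ⟨h, h0, _⟩; exact ⟨h0, h⟩
          · rintro ⟨h0, h⟩; exact ⟨h, h0, h.trans ht1⟩
        simp_rw [hset2, h2, Real.volume_Icc, sub_zero]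
        calc ∑ i, ENNReal.ofReal (α i) * ENNReal.ofReal (D i k t)
            = ∑ i, ENNReal.ofReal (α i * D i k t) :=
              Finset.sum_congr rfl fun i _ => (ENNReal.ofReal_mul (hα i)).symm
          _ = ENNReal.ofReal (∑ i, α i * D i k t) :=
              (ENNReal.ofReal_sum_of_nonneg
                (fun i _ => mul_nonneg (hα i) (hDmem i k t ⟨ht0, ht1⟩).1)).symm
          _ = ENNReal.ofReal t := by rw [hαD k t ⟨ht0, ht1⟩]
      · -- 1 < t
        have hset2 : ∀ i : Fin (m+1),
            {s : ℝ | ginv (D i k) s ≤ t} ∩ Icc 0 1 = Icc (0:ℝ) 1 := by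
          intro i
          refine subset_antisymm (inter_subset_right) (fun s hs => ⟨?_, hs⟩)
          exact (ginv_le_one (D i k) s).trans ht1.le
        have h2 : Iic t ∩ Icc (0:ℝ) 1 = Icc (0:ℝ) 1 := by
          refine subset_antisymm (inter_subset_right) (fun s hs => ⟨hs.2.trans ht1.le, hs⟩)
        simp_rw [hset2, h2, Real.volume_Icc, sub_zero, ENNReal.ofReal_one, mul_one]
        exact hαsum'
  · -- cdf
    intro u hu
    have hDu : ∀ i, ∀ k, D i k (u k) ∈ Icc (0:ℝ) 1 := fun i k => hDmem i k _ (hu k)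
    rw [hνdef, Measure.finset_sum_apply]
    have hterm : ∀ i, (ENNReal.ofReal (α i) • ((μ i).map (T i))) {x | ∀ k, x k ≤ u k} =
        ENNReal.ofReal (α i) * μ i {x | ∀ k, x k ≤ D i k (u k)} := by
      intro i
      rw [Measure.smul_apply, smul_eq_mul, Measure.map_apply (hTmeas i) (hSmeas u)]
      congr 1
      have hset : T i ⁻¹' {x | ∀ k, x k ≤ u k} = {x | ∀ k, ginv (D i k) (x k) ≤ u k} := rfl
      rw [hset, hkey i u hu]
    simp_rw [hterm]
    rw [ENNReal.toReal_sum (fun i _ => ENNReal.mul_ne_top ENNReal.ofReal_ne_top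
      (measure_ne_top _ _))]
    refine Finset.sum_congr rfl fun i _ => ?_
    rw [ENNReal.toReal_mul, ENNReal.toReal_ofReal (hα i),
      hrepr i (fun j => D i j (u j)) (fun k => hDu i k)]
end

section
/- Let X be an integrable random variable with distribution function F and let p ∈ (0,1). Then AV@R_p(X) := (1/(1-p)) ∫_p^1 q_t⁻(F) dt equals min over u ∈ ℝ of { u + (1/(1-p)) E[(X-u)⁺] }, and the minimum is attained at u = q_p⁻(F). -/
/-!
Under Lebesgue measure on `(0,1)` the lower quantile function `q` of `F` has law `F`
(`q t ≤ x ↔ t ≤ F x` by right continuity), so `E[(X-u)⁺] = ∫₀¹ (q t - u)⁺ dt`. For every `u`,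
`∫ₚ¹ q ≤ ∫ₚ¹ (q - u)⁺ + (1-p) u ≤ (1-p) u + ∫₀¹ (q - u)⁺`, and since `q` is nondecreasing both
inequalities are equalities at `u = q p`: `(q t - q p)⁺` vanishes for `t ≤ p` and equals
`q t - q p` for `t > p`.
-/

open MeasureTheory Set

theorem volume_Iic_inter_Ioo_zero_one {a : ℝ} (ha : a ∈ Icc 0 1) :
    volume (Iic a ∩ Ioo 0 1) = ENNReal.ofReal a := by
  rw [measure_congr (Filter.EventuallyEq.rfl.inter Ioo_ae_eq_Ioc), Iic_inter_Ioc_of_le ha.2,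
    Real.volume_Ioc, sub_zero]

namespace ProbabilityTheory

-- For a cdf `F` the level set is all of `ℝ` when `t ≤ 0` and empty when `1 < t`, where `sInf`
-- returns the junk value `0`; only `t ∈ (0,1)` is ever used.
noncomputable def lowerQuantile (F : ℝ → ℝ) (t : ℝ) : ℝ := sInf {x | t ≤ F x}

section Quantile

variable (ν : Measure ℝ)

theorem lowerQuantile_cdf_le_iff {t : ℝ} (ht : t ∈ Ioo 0 1) (x : ℝ) :
    lowerQuantile (cdf ν) t ≤ x ↔ t ≤ cdf ν x := by
  have hne : {x | t ≤ cdf ν x}.Nonempty :=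
    ((tendsto_cdf_atTop ν).eventually (eventually_ge_nhds ht.2)).exists
  have hbdd : BddBelow {x | t ≤ cdf ν x} := by
    obtain ⟨y, hy⟩ := ((tendsto_cdf_atBot ν).eventually (eventually_lt_nhds ht.1)).exists
    exact ⟨y, fun z hz => le_of_not_ge fun hzy => (hz.trans (monotone_cdf ν hzy)).not_gt hy⟩
  refine ⟨fun h => ?_, fun h => csInf_le hbdd h⟩
  -- right continuity of the cdf puts the infimum into the level set
  have hmem : t ≤ cdf ν (lowerQuantile (cdf ν) t) := by
    refine ge_of_tendsto (((cdf ν).right_continuous _).tendsto.mono_left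
      (nhdsWithin_mono _ Ioi_subset_Ici_self)) ?_
    filter_upwards [self_mem_nhdsWithin] with y hy
    obtain ⟨s, hs, hsy⟩ := exists_lt_of_csInf_lt hne hy
    exact hs.trans (monotone_cdf ν hsy.le)
  exact hmem.trans (monotone_cdf ν h)

theorem monotoneOn_lowerQuantile_cdf : MonotoneOn (lowerQuantile (cdf ν)) (Ioo 0 1) :=
  fun _ hs _ ht hst =>
    (lowerQuantile_cdf_le_iff ν hs _).2 (hst.trans ((lowerQuantile_cdf_le_iff ν ht _).1 le_rfl))

theorem aemeasurable_lowerQuantile_cdf :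
    AEMeasurable (lowerQuantile (cdf ν)) (volume.restrict (Ioo 0 1)) :=
  aemeasurable_restrict_of_monotoneOn measurableSet_Ioo (monotoneOn_lowerQuantile_cdf ν)

theorem map_lowerQuantile_cdf [IsProbabilityMeasure ν] :
    (volume.restrict (Ioo 0 1)).map (lowerQuantile (cdf ν)) = ν := by
  have : IsFiniteMeasure (volume.restrict (Ioo (0 : ℝ) 1)) :=
    isFiniteMeasure_restrict.2 measure_Ioo_lt_top.ne
  refine Measure.ext_of_Iic _ _ fun x => ?_
  have hpre : lowerQuantile (cdf ν) ⁻¹' Iic x ∩ Ioo 0 1 = Iic (cdf ν x) ∩ Ioo 0 1 := by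
    ext t
    simp only [mem_inter_iff, mem_preimage, mem_Iic]
    exact and_congr_left (lowerQuantile_cdf_le_iff ν · x)
  rw [Measure.map_apply_of_aemeasurable (aemeasurable_lowerQuantile_cdf ν) measurableSet_Iic,
    Measure.restrict_apply' measurableSet_Ioo, hpre,
    volume_Iic_inter_Ioo_zero_one ⟨cdf_nonneg ν x, cdf_le_one ν x⟩, ofReal_cdf]

theorem integral_comp_lowerQuantile_cdf [IsProbabilityMeasure ν] {φ : ℝ → ℝ}
    (hφ : AEStronglyMeasurable φ ν) :
    ∫ t in Ioo 0 1, φ (lowerQuantile (cdf ν) t) = ∫ x, φ x ∂ν := by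
  rw [← integral_map (aemeasurable_lowerQuantile_cdf ν) (by rwa [map_lowerQuantile_cdf ν]),
    map_lowerQuantile_cdf ν]

theorem integrableOn_lowerQuantile_cdf [IsProbabilityMeasure ν] (hν : Integrable id ν) :
    IntegrableOn (lowerQuantile (cdf ν)) (Ioo 0 1) := by
  rw [← map_lowerQuantile_cdf ν] at hν
  exact (integrable_map_measure aestronglyMeasurable_id (aemeasurable_lowerQuantile_cdf ν)).1 hν

end Quantile

section UnitInterval

variable {f : ℝ → ℝ} {p : ℝ}

theorem setIntegral_Ioo_le_mul_add_setIntegral_max (hf : IntegrableOn f (Ioo 0 1))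
    (hp : p ∈ Icc 0 1) (u : ℝ) :
    ∫ t in Ioo p 1, f t ≤ (1 - p) * u + ∫ t in Ioo 0 1, max (f t - u) 0 := by
  have hsub : Ioo p 1 ⊆ Ioo 0 1 := Ioo_subset_Ioo_left hp.1
  have hsub_u : IntegrableOn (fun t => f t - u) (Ioo 0 1) :=
    hf.sub (integrableOn_const measure_Ioo_lt_top.ne)
  have hmax : IntegrableOn (fun t => max (f t - u) 0) (Ioo 0 1) := hsub_u.pos_part
  calc ∫ t in Ioo p 1, f t = (∫ t in Ioo p 1, (f t - u)) + (1 - p) * u := by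
        rw [integral_sub (hf.mono_set hsub) (integrableOn_const measure_Ioo_lt_top.ne),
          setIntegral_const, Real.volume_real_Ioo_of_le hp.2, smul_eq_mul]
        ring
    _ ≤ (∫ t in Ioo p 1, max (f t - u) 0) + (1 - p) * u :=
        add_le_add (setIntegral_mono_on (hsub_u.mono_set hsub) (hmax.mono_set hsub)
          measurableSet_Ioo fun _ _ => le_max_left _ _) le_rfl
    _ ≤ (∫ t in Ioo 0 1, max (f t - u) 0) + (1 - p) * u :=
        add_le_add (setIntegral_mono_set hmax (ae_of_all _ fun _ => le_max_right _ _)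
          hsub.eventuallyLE) le_rfl
    _ = (1 - p) * u + ∫ t in Ioo 0 1, max (f t - u) 0 := add_comm _ _

theorem setIntegral_max_sub_apply_eq_of_monotoneOn (hf : IntegrableOn f (Ioo 0 1))
    (hmono : MonotoneOn f (Ioo 0 1)) (hp : p ∈ Ioo 0 1) :
    ∫ t in Ioo 0 1, max (f t - f p) 0 = (∫ t in Ioo p 1, f t) - (1 - p) * f p := by
  have hpos :
      EqOn (fun t => max (f t - f p) 0) ((Ioi p).indicator fun t => f t - f p) (Ioo 0 1) := by
    intro t ht
    rcases le_or_gt t p with htp | hpt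
    · rw [indicator_of_notMem (show t ∉ Ioi p from not_lt.2 htp)]
      exact max_eq_right (sub_nonpos.2 (hmono ht hp htp))
    · rw [indicator_of_mem (show t ∈ Ioi p from hpt)]
      exact max_eq_left (sub_nonneg.2 (hmono hp ht hpt.le))
  rw [setIntegral_congr_fun measurableSet_Ioo hpos, setIntegral_indicator measurableSet_Ioi,
    Ioo_inter_Ioi, max_eq_right hp.1.le,
    integral_sub (hf.mono_set (Ioo_subset_Ioo_left hp.1.le))
      (integrableOn_const measure_Ioo_lt_top.ne),
    setIntegral_const, Real.volume_real_Ioo_of_le hp.2.le, smul_eq_mul]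

end UnitInterval

end ProbabilityTheory

open ProbabilityTheory

/-- Rockafellar–Uryasev representation: for an integrable `X` and `p ∈ (0,1)`,
`AV@R_p(X) = (1/(1-p)) ∫_p^1 q_t⁻(F) dt` equals the minimum over `u` of
`u + (1/(1-p)) E[(X-u)⁺]`, attained at `u = q_p⁻(F)`. -/
theorem rockafellar_uryasev {Ω : Type*} [MeasurableSpace Ω]
    (μ : Measure Ω) [IsProbabilityMeasure μ]
    (X : Ω → ℝ) (hX : Integrable X μ) (p : ℝ) (hp : p ∈ Ioo 0 1)
    (F : ℝ → ℝ) (hF : ∀ x, F x = (μ {ω | X ω ≤ x}).toReal)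
    (q : ℝ → ℝ) (hq : ∀ t, q t = sInf {x | t ≤ F x})
    (g : ℝ → ℝ) (hg : ∀ u, g u = u + (1 / (1 - p)) * ∫ ω, max (X ω - u) 0 ∂μ) :
    (1 / (1 - p)) * (∫ t in Ioo p 1, q t) = g (q p) ∧ ∀ u : ℝ, g (q p) ≤ g u := by
  set ν := μ.map X
  have : IsProbabilityMeasure ν := Measure.isProbabilityMeasure_map hX.aemeasurable
  obtain rfl : F = cdf ν := funext fun x => by
    rw [hF, cdf_eq_real, measureReal_def, Measure.map_apply_of_aemeasurable hX.aemeasurable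
      measurableSet_Iic]
    rfl
  have hqν : q = lowerQuantile (cdf ν) := funext hq
  have hE (u : ℝ) : ∫ ω, max (X ω - u) 0 ∂μ = ∫ t in Ioo 0 1, max (q t - u) 0 := by
    have hφ : Continuous fun x : ℝ => max (x - u) 0 := by fun_prop
    rw [hqν, integral_comp_lowerQuantile_cdf ν hφ.aestronglyMeasurable,
      integral_map hX.aemeasurable hφ.aestronglyMeasurable]
  have hq_int : IntegrableOn q (Ioo 0 1) := hqν ▸ integrableOn_lowerQuantile_cdf ν
    ((integrable_map_measure aestronglyMeasurable_id hX.aemeasurable).2 hX)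
  have h1p : 1 - p ≠ 0 := (sub_pos.2 hp.2).ne'
  have hgq : g (q p) = (1 / (1 - p)) * ∫ t in Ioo p 1, q t := by
    rw [hg, hE, setIntegral_max_sub_apply_eq_of_monotoneOn hq_int
      (hqν ▸ monotoneOn_lowerQuantile_cdf ν) hp]
    field_simp
    ring
  refine ⟨hgq.symm, fun u => ?_⟩
  calc g (q p) ≤ (1 / (1 - p)) * ((1 - p) * u + ∫ t in Ioo 0 1, max (q t - u) 0) := by
        rw [hgq]
        gcongr
        · exact one_div_nonneg.2 (sub_nonneg.2 hp.2.le)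
        exact setIntegral_Ioo_le_mul_add_setIntegral_max hq_int (Ioo_subset_Icc_self hp) u
    _ = g u := by
        rw [hg, hE]
        field_simp
end

section
/- For an integrable random variable X, the left derivative of the convex function u ↦ E[(X-u)⁺] at u equals P(X < u) - 1. -/
/-!
Dominated convergence: the slopes of `v ↦ (x - v)⁺` are bounded by `1`, and as `v → u⁻` they
tend to `-1` where `u ≤ x` and to `0` where `x < u`. Hence the left derivative is
`-P(X ≥ u) = P(X < u) - 1`.
-/

open MeasureTheory Set Filter Topology

theorem abs_slope_posPart_sub_le_one (x u v : ℝ) :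
    |(max (x - v) 0 - max (x - u) 0) / (v - u)| ≤ 1 := by
  rcases eq_or_ne v u with rfl | hvu
  · simp
  rw [abs_div, div_le_one (abs_pos.mpr (sub_ne_zero.mpr hvu))]
  calc |max (x - v) 0 - max (x - u) 0| ≤ |(x - v) - (x - u)| := abs_max_sub_max_le_abs _ _ _
    _ = |v - u| := by rw [← abs_neg]; ring_nf

theorem tendsto_slope_posPart_sub_nhdsLT (x u : ℝ) :
    Tendsto (fun v => (max (x - v) 0 - max (x - u) 0) / (v - u)) (𝓝[<] u)
      (𝓝 (-(Ici u).indicator 1 x)) := by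
  rcases le_or_gt u x with hux | hxu
  · rw [indicator_of_mem (mem_Ici.mpr hux)]
    refine tendsto_const_nhds.congr' ?_
    filter_upwards [self_mem_nhdsWithin] with v (hvu : v < u)
    rw [max_eq_left (by linarith), max_eq_left (by linarith), Pi.one_apply,
      show x - v - (x - u) = -(v - u) by ring, neg_div_self (sub_ne_zero.mpr hvu.ne)]
  · rw [indicator_of_notMem (notMem_Ici.mpr hxu), neg_zero]
    refine tendsto_const_nhds.congr' ?_
    filter_upwards [nhdsWithin_le_nhds (eventually_gt_nhds hxu)] with v hxv
    rw [max_eq_right (by linarith), max_eq_right (by linarith), sub_self, zero_div]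

theorem tendsto_slope_integral_posPart_sub_nhdsLT {Ω : Type*} [MeasurableSpace Ω]
    {μ : Measure Ω} [IsFiniteMeasure μ] {X : Ω → ℝ} (hX : Integrable X μ) (u : ℝ) :
    Tendsto (fun v => ((∫ ω, max (X ω - v) 0 ∂μ) - ∫ ω, max (X ω - u) 0 ∂μ) / (v - u))
      (𝓝[<] u) (𝓝 (-μ.real {ω | u ≤ X ω})) := by
  have hint (v : ℝ) : Integrable (fun ω => max (X ω - v) 0) μ :=
    (hX.sub (integrable_const v)).pos_part
  have hslope (v : ℝ) : ((∫ ω, max (X ω - v) 0 ∂μ) - ∫ ω, max (X ω - u) 0 ∂μ) / (v - u) =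
      ∫ ω, (max (X ω - v) 0 - max (X ω - u) 0) / (v - u) ∂μ := by
    rw [integral_div, integral_sub (hint v) (hint u)]
  have hlim : ∫ ω, -(Ici u).indicator 1 (X ω) ∂μ = -μ.real {ω | u ≤ X ω} := by
    simp_rw [integral_neg, ← indicator_comp_right (g := (1 : ℝ → ℝ)) X,
      integral_indicator₀ (hX.aemeasurable.nullMeasurableSet_preimage measurableSet_Ici)]
    simp [preimage]
  simp_rw [hslope, ← hlim]
  refine tendsto_integral_filter_of_dominated_convergence (fun _ => 1)
    (Eventually.of_forall fun v => (((hint v).sub (hint u)).div_const _).aestronglyMeasurable)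
    (Eventually.of_forall fun v => Eventually.of_forall fun ω =>
      abs_slope_posPart_sub_le_one (X ω) u v)
    (integrable_const 1)
    (Eventually.of_forall fun ω => tendsto_slope_posPart_sub_nhdsLT (X ω) u)

/-- For an integrable random variable `X`, the left derivative of the convex function
`u ↦ E[(X-u)⁺]` at `u` equals `P(X < u) - 1`. -/
theorem left_derivative_expected_excess {Ω : Type*} [MeasurableSpace Ω]
    (μ : Measure Ω) [IsProbabilityMeasure μ]
    (X : Ω → ℝ) (hX : Integrable X μ) (u : ℝ) :
    Tendsto (fun u' => ((∫ ω, max (X ω - u') 0 ∂μ) - ∫ ω, max (X ω - u) 0 ∂μ) / (u' - u))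
      (𝓝[<] u) (𝓝 ((μ {ω | X ω < u}).toReal - 1)) := by
  have hcompl : μ.real {ω | u ≤ X ω} = 1 - μ.real {ω | X ω < u} := by
    simpa only [compl_ofPred, not_lt] using
      probReal_compl_eq_one_sub₀ (nullMeasurableSet_lt hX.aemeasurable aemeasurable_const)
  simpa only [hcompl, neg_sub, measureReal_def] using
    tendsto_slope_integral_posPart_sub_nhdsLT hX u
end

section
/- Let y ∈ ℝ^K, sort y in decreasing order as u_1 ≥ u_2 ≥ … ≥ u_K, set τ = max{ 1 ≤ j ≤ K : u_j + (1/j)(1 - ∑_{k=1}^j u_k) > 0 } and λ = (1/τ)(1 - ∑_{k=1}^τ u_k). Then the vector x with x_i = max(y_i + λ, 0) is the Euclidean projection of y onto the simplex Δ^{K-1}, i.e., x is the unique minimizer of ‖x - y‖₂ over { x ∈ ℝ^K : x_i ≥ 0, ∑_i x_i = 1 }. -/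
open Finset

/-- Correctness of the Euclidean projection onto the standard simplex: with `u` a decreasing
rearrangement of `y`, `τ` the largest index with `u_τ + (1/τ)(1 - ∑_{k≤τ} u_k) > 0`,
`λ = (1/τ)(1 - ∑_{k≤τ} u_k)` and `x_i = max(y_i + λ, 0)`, the vector `x` is the unique
minimizer of the Euclidean distance to `y` over the simplex. -/
theorem simplex_projection_correct (K : ℕ) (y u : Fin K → ℝ)
    (hsorted : ∀ i j : Fin K, i ≤ j → u j ≤ u i)
    (hperm : ∃ σ : Equiv.Perm (Fin K), u = y ∘ σ)
    (τ : Fin K)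
    (hτpos : 0 < u τ + (1 / ((τ : ℕ) + 1 : ℝ)) * (1 - ∑ k ∈ Finset.Iic τ, u k))
    (hτmax : ∀ j : Fin K,
      0 < u j + (1 / ((j : ℕ) + 1 : ℝ)) * (1 - ∑ k ∈ Finset.Iic j, u k) → j ≤ τ)
    (lam : ℝ) (hlam : lam = (1 / ((τ : ℕ) + 1 : ℝ)) * (1 - ∑ k ∈ Finset.Iic τ, u k))
    (x : Fin K → ℝ) (hx : ∀ i, x i = max (y i + lam) 0) :
    (∀ i, 0 ≤ x i) ∧ (∑ i, x i = 1) ∧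
    (∀ z : Fin K → ℝ, (∀ i, 0 ≤ z i) → (∑ i, z i = 1) →
      (∑ i, (x i - y i) ^ 2 ≤ ∑ i, (z i - y i) ^ 2) ∧
      (z ≠ x → ∑ i, (x i - y i) ^ 2 < ∑ i, (z i - y i) ^ 2)) := by
  obtain ⟨σ, hσ⟩ := hperm
  have hxnn : ∀ i, 0 ≤ x i := fun i => (hx i) ▸ le_max_right _ _
  set S : ℝ := ∑ k ∈ Finset.Iic τ, u k with hS
  have hτ1pos : (0:ℝ) < (τ : ℕ) + 1 := by positivity
  have hlam' : ((τ : ℕ) + 1 : ℝ) * lam = 1 - S := by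
    rw [hlam]; field_simp
  -- u τ + lam > 0
  have hutlam : 0 < u τ + lam := by
    rw [hlam]; exact hτpos
  -- for k ≤ τ, u k + lam > 0
  have hA : ∀ k ∈ Finset.Iic τ, max (u k + lam) 0 = u k + lam := by
    intro k hk
    have : u τ ≤ u k := hsorted k τ (Finset.mem_Iic.mp hk)
    have : 0 < u k + lam := by linarith
    exact max_eq_left this.le
  -- for k > τ, u k + lam ≤ 0
  have hB : ∀ k : Fin K, τ < k → u k + lam ≤ 0 := by
    intro k hk
    have h1 : (τ : ℕ) + 1 ≤ (k : ℕ) := hk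
    have h2 : (τ : ℕ) + 1 < K := lt_of_le_of_lt h1 k.isLt
    set t1 : Fin K := ⟨(τ : ℕ) + 1, h2⟩ with ht1def
    have ht1τ : ¬ (t1 ≤ τ) := by
      simp only [ht1def, Fin.le_def]; omega
    have ht1 : ¬ (0 < u t1 + (1 / ((t1 : ℕ) + 1 : ℝ)) * (1 - ∑ j ∈ Finset.Iic t1, u j)) :=
      fun h => ht1τ (hτmax t1 h)
    push_neg at ht1
    have hIic : Finset.Iic t1 = insert t1 (Finset.Iic τ) := by
      ext a
      simp only [Finset.mem_Iic, Finset.mem_insert, Fin.le_def, Fin.ext_iff, ht1def]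
      omega
    have ht1mem : t1 ∉ Finset.Iic τ := by
      simpa using ht1τ
    have hsum : ∑ j ∈ Finset.Iic t1, u j = u t1 + S := by
      rw [hIic, Finset.sum_insert ht1mem]
    rw [hsum] at ht1
    have hcast : ((t1 : ℕ) : ℝ) + 1 = ((τ : ℕ) : ℝ) + 2 := by
      simp [ht1def]; ring
    rw [hcast] at ht1
    have hτ2pos : (0:ℝ) < ((τ : ℕ) : ℝ) + 2 := by positivity
    have ht1' : (((τ : ℕ) : ℝ) + 2) * u t1 + (1 - (u t1 + S)) ≤ 0 := by
      have := mul_le_mul_of_nonneg_left ht1 hτ2pos.le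
      rw [mul_zero] at this
      calc (((τ : ℕ) : ℝ) + 2) * u t1 + (1 - (u t1 + S))
          = (((τ : ℕ) : ℝ) + 2) * (u t1 + 1 / (((τ : ℕ) : ℝ) + 2) * (1 - (u t1 + S))) := by
            field_simp
        _ ≤ 0 := this
    -- so (τ+1) * (u t1 + lam) ≤ 0
    have hut1lam : u t1 + lam ≤ 0 := by
      nlinarith [hlam', hτ1pos]
    have : u k ≤ u t1 := hsorted t1 k (by exact h1)
    linarith
  -- sum of x equals 1
  have hcard : (Finset.Iic τ).card = (τ : ℕ) + 1 := by
    simp [Fin.card_Iic]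
  have hsum1 : ∑ i, x i = 1 := by
    have e1 : ∑ i, x i = ∑ i, max (u i + lam) 0 := by
      calc ∑ i, x i = ∑ i, max (y i + lam) 0 := Finset.sum_congr rfl fun i _ => hx i
        _ = ∑ i, max (y (σ i) + lam) 0 := (Equiv.sum_comp σ _).symm
        _ = ∑ i, max (u i + lam) 0 := by simp [hσ]
    rw [e1, ← Finset.sum_add_sum_compl (Finset.Iic τ)]
    have e2 : ∑ i ∈ Finset.Iic τ, max (u i + lam) 0 = S + ((τ : ℕ) + 1 : ℝ) * lam := by
      rw [Finset.sum_congr rfl hA, Finset.sum_add_distrib, Finset.sum_const, hcard]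
      ring
    have e3 : ∑ i ∈ (Finset.Iic τ)ᶜ, max (u i + lam) 0 = 0 := by
      apply Finset.sum_eq_zero
      intro k hk
      have : τ < k := by
        simpa using Finset.mem_compl.mp hk
      exact max_eq_right (hB k this)
    rw [e2, e3, hlam']; ring
  refine ⟨hxnn, hsum1, ?_⟩
  intro z hz hzsum
  -- key pointwise facts
  have hge : ∀ i, lam ≤ x i - y i := by
    intro i
    have : y i + lam ≤ x i := (hx i) ▸ le_max_left _ _
    linarith
  have hxd : ∀ i, x i * (x i - y i - lam) = 0 := by
    intro i
    rcases le_or_gt (y i + lam) 0 with h | h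
    · rw [hx i, max_eq_right h]; ring
    · rw [hx i, max_eq_left h.le]; ring
  have key : 0 ≤ ∑ i, (z i - x i) * (x i - y i) := by
    have h1 : ∑ i, (z i - x i) * lam ≤ ∑ i, (z i - x i) * (x i - y i) := by
      apply Finset.sum_le_sum
      intro i _
      nlinarith [hz i, hge i, hxd i, hxnn i]
    have h2 : ∑ i, (z i - x i) * lam = 0 := by
      rw [← Finset.sum_mul, Finset.sum_sub_distrib, hzsum, hsum1]
      ring
    linarith
  have expand : ∑ i, (z i - y i) ^ 2
      = ∑ i, (x i - y i) ^ 2 + ∑ i, (z i - x i) ^ 2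
        + 2 * ∑ i, (z i - x i) * (x i - y i) := by
    rw [← Finset.sum_add_distrib, Finset.mul_sum, ← Finset.sum_add_distrib]
    exact Finset.sum_congr rfl fun i _ => by ring
  have hsq : 0 ≤ ∑ i, (z i - x i) ^ 2 :=
    Finset.sum_nonneg fun i _ => sq_nonneg _
  constructor
  · linarith
  · intro hne
    have : ∃ i, z i ≠ x i := by
      by_contra h
      push_neg at h
      exact hne (funext h)
    obtain ⟨i, hi⟩ := this
    have hpos : 0 < ∑ i, (z i - x i) ^ 2 := by
      apply Finset.sum_pos' (fun j _ => sq_nonneg _)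
      refine ⟨i, Finset.mem_univ i, ?_⟩
      have hne0 : z i - x i ≠ 0 := sub_ne_zero.mpr hi
      positivity
    linarith
end

section
/- In the simplex projection algorithm, the index set defining τ is 'upper closed': if u_j + (1/j)(1 - ∑_{k=1}^j u_k) ≤ 0 for some j, then the same inequality holds for all j' ≥ j (given u_1 ≥ … ≥ u_K sorted decreasing). Hence τ is well defined as the largest index with a positive value. -/
open Finset

/-- In the simplex projection algorithm, with `ρ_j = u_j + (1/j)(1 - ∑_{k≤j} u_k)` and `u`
sorted decreasingly, the set `{j : ρ_j > 0}` is upper closed in the complement sense: if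
`ρ_j ≤ 0` then `ρ_{j'} ≤ 0` for all `j' ≥ j`.  Hence `{j : ρ_j > 0}` is an initial segment
`{1, …, τ}`, so `τ` is well defined as the largest index with positive value. -/
theorem simplex_projection_tau_wellDefined (K : ℕ) (hK : 0 < K) (u : Fin K → ℝ)
    (hsorted : ∀ i j : Fin K, i ≤ j → u j ≤ u i)
    (ρ : Fin K → ℝ)
    (hρ : ∀ j, ρ j = u j + (1 / ((j : ℕ) + 1 : ℝ)) * (1 - ∑ k ∈ Finset.Iic j, u k)) :
    (∀ j j' : Fin K, j ≤ j' → ρ j ≤ 0 → ρ j' ≤ 0) ∧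
    (∃ τ : Fin K, ∀ i : Fin K, 0 < ρ i ↔ i ≤ τ) := by
  -- step lemma: consecutive indices
  have step : ∀ a b : Fin K, (b : ℕ) = (a : ℕ) + 1 → ρ a ≤ 0 → ρ b ≤ 0 := by
    intro a b hb ha
    have hab : a ≤ b := by simp [Fin.le_def, hb]
    have hub : u b ≤ u a := hsorted a b hab
    have hbnot : b ∉ Finset.Iic a := by
      simp [Finset.mem_Iic, Fin.le_def, hb]
    have hIic : Finset.Iic b = insert b (Finset.Iic a) := by
      ext x
      simp only [Finset.mem_Iic, Finset.mem_insert, Fin.le_def, Fin.ext_iff, hb]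
      omega
    set Sa := ∑ k ∈ Finset.Iic a, u k with hSa
    have hsum : ∑ k ∈ Finset.Iic b, u k = u b + Sa := by
      rw [hIic, Finset.sum_insert hbnot]
    set c : ℝ := ((a : ℕ) : ℝ) + 1 with hc
    have hcpos : (0:ℝ) < c := by positivity
    have hcne : c ≠ 0 := ne_of_gt hcpos
    have ha' : u a + (1 / c) * (1 - Sa) ≤ 0 := by rw [hρ a] at ha; exact ha
    have h2 : c * u a + (1 - Sa) ≤ 0 := by
      have := mul_le_mul_of_nonneg_left ha' (le_of_lt hcpos)
      rw [mul_zero] at this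
      have heq : c * (u a + 1 / c * (1 - Sa)) = c * u a + (1 - Sa) := by
        field_simp
      linarith [heq ▸ this]
    rw [hρ b, hsum, hb]
    have hcb : ((a : ℕ) + 1 : ℕ) + 1 = c + 1 := by push_cast [hc]; ring
    rw [show (((a : ℕ) + 1 : ℕ) : ℝ) + 1 = c + 1 by push_cast [hc]; ring]
    have hc1 : (0:ℝ) < c + 1 := by linarith
    have hrw : u b + 1 / (c + 1) * (1 - (u b + Sa)) = (c * u b + (1 - Sa)) / (c + 1) := by
      field_simp
      ring
    rw [hrw]
    apply div_nonpos_of_nonpos_of_nonneg _ (le_of_lt hc1)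
    nlinarith [mul_le_mul_of_nonneg_left hub (le_of_lt hcpos)]
  -- chained version
  have chain : ∀ n : ℕ, ∀ j j' : Fin K, (j' : ℕ) = (j : ℕ) + n → ρ j ≤ 0 → ρ j' ≤ 0 := by
    intro n
    induction n with
    | zero =>
      intro j j' h hj
      have : j' = j := Fin.ext (by omega)
      rwa [this]
    | succ m ih =>
      intro j j' h hj
      have hmlt : (j : ℕ) + m < K := by omega
      set a : Fin K := ⟨(j : ℕ) + m, hmlt⟩
      have ha : ρ a ≤ 0 := ih j a rfl hj
      exact step a j' (by simp [a]; omega) ha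
  have part1 : ∀ j j' : Fin K, j ≤ j' → ρ j ≤ 0 → ρ j' ≤ 0 := by
    intro j j' hle hj
    exact chain ((j' : ℕ) - (j : ℕ)) j j' (by have := Fin.le_def.mp hle; omega) hj
  refine ⟨part1, ?_⟩
  -- ρ at 0 is 1
  have hzero : ρ ⟨0, hK⟩ = 1 := by
    have hIic0 : Finset.Iic (⟨0, hK⟩ : Fin K) = {⟨0, hK⟩} := by
      ext x
      simp [Finset.mem_Iic, Fin.le_def, Fin.ext_iff]
    rw [hρ, hIic0, Finset.sum_singleton]
    norm_num
  set S : Finset (Fin K) := Finset.univ.filter (fun i => 0 < ρ i) with hS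
  have hSne : S.Nonempty := ⟨⟨0, hK⟩, by simp [hS, hzero]⟩
  refine ⟨S.max' hSne, fun i => ⟨fun hi => ?_, fun hi => ?_⟩⟩
  · exact Finset.le_max' S i (by simp [hS, hi])
  · have hτ : 0 < ρ (S.max' hSne) := by
      have := S.max'_mem hSne
      simp [hS] at this
      exact this
    by_contra hneg
    push_neg at hneg
    exact absurd (part1 i (S.max' hSne) hi hneg) (not_le.mpr hτ)
end
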